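/- arXiv:2405.05037 — 2 statements merged into one kernel-verified Lean document; each statement's English description precedes it below -/
import Mathlib

section
/- Let ρ and σ be quantum states on ℂ^d, let ℳ be a nonempty set of POVMs on ℂ^d, and let α ∈ [1/2, 1). Then Q_α^ℳ(ρ‖σ) ≥ inf { α·tr[ρ·ω^{(α−1)/α}] + (1−α)·tr[σω] : ω positive definite, ω ∈ C_ℳ }, and moreover this infimum equals inf { tr[ρ·ω^{(α−1)/α}]^α · tr[σω]^{1−α} : ω positive definite, ω ∈ C_ℳ }. -/
open scoped Kronecker ComplexOrder
open Matrix Filter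

noncomputable section
open scoped Classical

namespace MRD

/-- A POVM on the Hilbert space `ℂ^n` (for a finite index type `n`), over a finite
outcome alphabet `ι`. -/
structure POVM (n : Type) [Fintype n] [DecidableEq n] where
  ι : Type
  [fin : Fintype ι]
  elem : ι → Matrix n n ℂ
  pos : ∀ z, (elem z).PosSemidef
  sum_one : ∑ z, elem z = 1

attribute [instance] POVM.fin

variable {n : Type} [Fintype n] [DecidableEq n]

/-- The probability distribution induced by a state and a POVM (Born rule). -/
def POVM.dist (M : POVM n) (ρ : Matrix n n ℂ) : M.ι → ℝ :=
  fun z => ((ρ * M.elem z).trace).re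

/-- `tr2 A B = Re tr[A B]`. -/
def tr2 (A B : Matrix n n ℂ) : ℝ := ((A * B).trace).re

/-- The cone `C_ℳ` generated by a set of POVMs: the union of the conical hulls of the POVMs. -/
def cone (𝓜 : Set (POVM n)) : Set (Matrix n n ℂ) :=
  { ω | ∃ M ∈ 𝓜, ∃ lam : M.ι → ℝ, (∀ z, 0 ≤ lam z) ∧ ω = ∑ z, (lam z : ℂ) • M.elem z }

/-- Functional calculus for Hermitian matrices (junk value `0` on non-Hermitian input). -/
def hermCFC (f : ℝ → ℝ) (ω : Matrix n n ℂ) : Matrix n n ℂ :=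
  if h : ω.IsHermitian then
    (h.eigenvectorUnitary : Matrix n n ℂ) * Matrix.diagonal (fun i => (f (h.eigenvalues i) : ℂ)) *
      star (h.eigenvectorUnitary : Matrix n n ℂ)
  else 0

/-- Real powers of a (Hermitian, positive definite) matrix, via functional calculus. -/
def mpow (ω : Matrix n n ℂ) (p : ℝ) : Matrix n n ℂ := hermCFC (fun x => x ^ p) ω

/-- Logarithm of a (Hermitian, positive definite) matrix, via functional calculus. -/
def mlog (ω : Matrix n n ℂ) : Matrix n n ℂ := hermCFC Real.log ω

/-- The classical quantity `Q_α(μ‖ν) = ∑_z μ(z)^α ν(z)^(1-α)`. -/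
def Qclass {Z : Type} [Fintype Z] (α : ℝ) (μ ν : Z → ℝ) : ℝ :=
  ∑ z, μ z ^ α * ν z ^ (1 - α)

/-- `Q_α` for `α > 1`, valued in `[0,∞]`: it is `+∞` unless `μ ≪ ν`. -/
def QclassE {Z : Type} [Fintype Z] (α : ℝ) (μ ν : Z → ℝ) : EReal :=
  if ∀ z, ν z = 0 → μ z = 0 then ((Qclass α μ ν : ℝ) : EReal) else ⊤

/-- The classical max-divergence `D_∞(μ‖ν) = max_{z : μ(z) ≠ 0} log (μ(z)/ν(z))`,
with the convention `log (c/0) = +∞`. -/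
def Dmax {Z : Type} [Fintype Z] (μ ν : Z → ℝ) : EReal :=
  ⨆ z : {z : Z // μ z ≠ 0},
    (if ν z.1 = 0 then (⊤ : EReal) else ((Real.log (μ z.1 / ν z.1) : ℝ) : EReal))

/-- The classical Rényi divergence of order `α ∈ (0,∞]` (`α : EReal`), with the standard
conventions for `+∞` in the non-absolutely-continuous / orthogonal cases. -/
def rdiv {Z : Type} [Fintype Z] (α : EReal) (μ ν : Z → ℝ) : EReal :=
  if α = ⊤ then Dmax μ ν
  else if α = 1 then
    (if ∀ z, ν z = 0 → μ z = 0 then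
      (((∑ z, μ z * Real.log (μ z / ν z)) : ℝ) : EReal) else ⊤)
  else if 1 < α then
    (if ∀ z, ν z = 0 → μ z = 0 then
      (((α.toReal - 1)⁻¹ * Real.log (Qclass α.toReal μ ν) : ℝ) : EReal) else ⊤)
  else
    (if ∃ z, μ z ≠ 0 ∧ ν z ≠ 0 then
      (((α.toReal - 1)⁻¹ * Real.log (Qclass α.toReal μ ν) : ℝ) : EReal) else ⊤)

/-- The measured Rényi divergence `D_α^ℳ(ρ‖σ) = sup_{M ∈ ℳ} D_α(μ_ρ^M‖μ_σ^M)`. -/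
def mrdiv (𝓜 : Set (POVM n)) (α : EReal) (ρ σ : Matrix n n ℂ) : EReal :=
  ⨆ M ∈ 𝓜, rdiv α (M.dist ρ) (M.dist σ)

/-- The variational objective function `ν_α((ρ,σ); ω)`, for `α ∈ (0,∞]`. -/
def nuObj (α : EReal) (ρ σ ω : Matrix n n ℂ) : ℝ :=
  if α = ⊤ then Real.log (tr2 ρ ω) + 1 - tr2 σ ω
  else if α = 1 then tr2 ρ (mlog ω) + 1 - tr2 σ ω
  else if α.toReal < 1 / 2 then
    (α.toReal - 1)⁻¹ *
      Real.log (α.toReal * tr2 ρ ω + (1 - α.toReal) * tr2 σ (mpow ω (α.toReal / (α.toReal - 1))))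
  else
    (α.toReal - 1)⁻¹ *
      Real.log (α.toReal * tr2 ρ (mpow ω ((α.toReal - 1) / α.toReal)) + (1 - α.toReal) * tr2 σ ω)

section Bipartite

variable (a b : Type) [Fintype a] [DecidableEq a] [Fintype b] [DecidableEq b]

/-- A family of mutually orthogonal orthogonal projections summing to the identity. -/
def IsOrthProjFamily {ι : Type} [Fintype ι] {m : Type} [Fintype m] [DecidableEq m]
    (P : ι → Matrix m m ℂ) : Prop :=
  (∀ x, (P x).IsHermitian) ∧ (∀ x, P x * P x = P x) ∧
    (∀ x y, x ≠ y → P x * P y = 0) ∧ ∑ x, P x = 1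

/-- The class `P-LO(A:B)` of local projective measurements. -/
def PLO : Set (POVM (a × b)) :=
  { M | ∃ (X Y : Type) (_ : Fintype X) (_ : Fintype Y)
      (PA : X → Matrix a a ℂ) (PB : Y → Matrix b b ℂ) (e : M.ι ≃ X × Y),
      IsOrthProjFamily PA ∧ IsOrthProjFamily PB ∧
      ∀ z, M.elem z = PA (e z).1 ⊗ₖ PB (e z).2 }

/-- The class `LO(A:B)` of local measurements. -/
def LO : Set (POVM (a × b)) :=
  { M | ∃ (MA : POVM a) (MB : POVM b) (e : M.ι ≃ MA.ι × MB.ι),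
      ∀ z, M.elem z = MA.elem (e z).1 ⊗ₖ MB.elem (e z).2 }

/-- The partial transpose (transposition of the `B` tensor factor). -/
def ptrans {a b : Type} (X : Matrix (a × b) (a × b) ℂ) : Matrix (a × b) (a × b) ℂ :=
  Matrix.of fun x y => X (x.1, y.2) (y.1, x.2)

/-- Separable (positive semidefinite) operators: finite sums of tensor products of positive
semidefinite operators. -/
def SepMat {a b : Type} [Fintype a] [DecidableEq a] [Fintype b] [DecidableEq b]
    (ω : Matrix (a × b) (a × b) ℂ) : Prop :=
  ∃ (k : ℕ) (X : Fin k → Matrix a a ℂ) (Y : Fin k → Matrix b b ℂ),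
    (∀ z, (X z).PosSemidef) ∧ (∀ z, (Y z).PosSemidef) ∧ ω = ∑ z, X z ⊗ₖ Y z

/-- The class `SEP(A:B)`: POVMs all of whose elements are separable. -/
def SEP : Set (POVM (a × b)) := { M | ∀ z, SepMat (M.elem z) }

/-- The class `PPT(A:B)`: POVMs all of whose elements have positive semidefinite
partial transpose. -/
def PPT : Set (POVM (a × b)) := { M | ∀ z, (ptrans (M.elem z)).PosSemidef }

end Bipartite

/-- The maximally entangled state `Φ` on `ℂ^d ⊗ ℂ^d`. -/
def maxEnt (d : ℕ) : Matrix (Fin d × Fin d) (Fin d × Fin d) ℂ :=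
  Matrix.of fun x y => if x.1 = x.2 ∧ y.1 = y.2 then ((d : ℂ))⁻¹ else 0

/-- The orthogonal complement `Φ⊥ = (1 - Φ)/(d² - 1)`. -/
def maxEntPerp (d : ℕ) : Matrix (Fin d × Fin d) (Fin d × Fin d) ℂ :=
  ((d : ℂ) ^ 2 - 1)⁻¹ • (1 - maxEnt d)

/-- The isotropic state `i(q) = q Φ + (1 - q) Φ⊥`. -/
def iso (d : ℕ) (q : ℝ) : Matrix (Fin d × Fin d) (Fin d × Fin d) ℂ :=
  (q : ℂ) • maxEnt d + ((1 - q : ℝ) : ℂ) • maxEntPerp d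

/-- The `n`-fold tensor (Kronecker) power of a matrix on `ℂ^d`. -/
def tpow {d : ℕ} (ρ : Matrix (Fin d) (Fin d) ℂ) (n : ℕ) :
    Matrix (Fin n → Fin d) (Fin n → Fin d) ℂ :=
  Matrix.of fun x y => ∏ i, ρ (x i) (y i)

/-- The `n`-fold tensor power of a bipartite matrix on `ℂ^d ⊗ ℂ^d`, written on
`((ℂ^d)^{⊗n})_A ⊗ ((ℂ^d)^{⊗n})_B`, i.e. with all `A`-factors grouped into one block and all
`B`-factors into the other. -/
def tpowBip {d : ℕ} (ρ : Matrix (Fin d × Fin d) (Fin d × Fin d) ℂ) (n : ℕ) :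
    Matrix ((Fin n → Fin d) × (Fin n → Fin d)) ((Fin n → Fin d) × (Fin n → Fin d)) ℂ :=
  Matrix.of fun x y => ∏ i, ρ (x.1 i, x.2 i) (y.1 i, y.2 i)

/-- The tensor product of a matrix on `(ℂ^d)^{⊗k}` and a matrix on `(ℂ^d)^{⊗l}`, as a matrix
on `(ℂ^d)^{⊗(k+l)}`. -/
def prodElem {d k l : ℕ} (A : Matrix (Fin k → Fin d) (Fin k → Fin d) ℂ)
    (B : Matrix (Fin l → Fin d) (Fin l → Fin d) ℂ) :
    Matrix (Fin (k + l) → Fin d) (Fin (k + l) → Fin d) ℂ :=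
  Matrix.of fun x y =>
    A (fun i => x (Fin.castAdd l i)) (fun i => y (Fin.castAdd l i)) *
      B (fun j => x (Fin.natAdd k j)) (fun j => y (Fin.natAdd k j))

/-- A family `(ℳ_n)_n` of measurement sets is closed under tensor products if for all
`M_k ∈ ℳ_k` and `M_l ∈ ℳ_l` the product POVM `M_k ⊗ M_l` belongs to `ℳ_{k+l}`. -/
def TensorClosed {d : ℕ} (𝓜 : ∀ m : ℕ, Set (POVM (Fin m → Fin d))) : Prop :=
  ∀ k l : ℕ, ∀ Mk ∈ 𝓜 k, ∀ Ml ∈ 𝓜 l,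
    ∃ M ∈ 𝓜 (k + l), ∃ e : Mk.ι × Ml.ι ≃ M.ι,
      ∀ z, M.elem (e z) = prodElem (Mk.elem z.1) (Ml.elem z.2)

/-- `T` is a test available in the measurement set `𝓝`: `0 ≤ T ≤ 1` and the binary POVM
`{T, 1 - T}` belongs to `𝓝`. -/
def IsTest {m : Type} [Fintype m] [DecidableEq m] (𝓝 : Set (POVM m)) (T : Matrix m m ℂ) : Prop :=
  T.PosSemidef ∧ (1 - T).PosSemidef ∧
    ∃ M ∈ 𝓝, ∃ e : M.ι ≃ Bool, M.elem (e.symm true) = T ∧ M.elem (e.symm false) = 1 - T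

/-- Extended-real logarithm of a real number: `-∞` on `(-∞,0]`. -/
def elogr (x : ℝ) : EReal := if x ≤ 0 then ⊥ else ((Real.log x : ℝ) : EReal)

/-- Extended-real logarithm on `EReal`. -/
def elog (x : EReal) : EReal :=
  if x ≤ 0 then ⊥ else if x = ⊤ then ⊤ else ((Real.log x.toReal : ℝ) : EReal)


/-- Extra: the action of `id_m ⊗ 𝒢` on block matrices (for complete positivity). -/
def blockApply {d : ℕ} (𝒢 : Matrix (Fin d) (Fin d) ℂ →ₗ[ℂ] Matrix (Fin d) (Fin d) ℂ) (m : ℕ)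
    (X : Matrix (Fin m × Fin d) (Fin m × Fin d) ℂ) : Matrix (Fin m × Fin d) (Fin m × Fin d) ℂ :=
  Matrix.of fun p q => 𝒢 (Matrix.of fun s t => X (p.1, s) (q.1, t)) p.2 q.2


set_option linter.unusedSectionVars false
set_option linter.unusedVariables false
set_option maxHeartbeats 1000000

def qf (A : Matrix n n ℂ) (v : n → ℂ) : ℝ := (star v ⬝ᵥ A *ᵥ v).re

lemma qf_nonneg {A : Matrix n n ℂ} (hA : A.PosSemidef) (v : n → ℂ) : 0 ≤ qf A v := by
  have := hA.dotProduct_mulVec_nonneg v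
  rw [Complex.le_def] at this
  exact this.1

lemma qf_pos {A : Matrix n n ℂ} (hA : A.PosDef) {v : n → ℂ} (hv : v ≠ 0) : 0 < qf A v := by
  have := hA.dotProduct_mulVec_pos hv
  rw [Complex.lt_def] at this
  exact this.1

lemma qf_smul_real (c : ℝ) (A : Matrix n n ℂ) (v : n → ℂ) :
    qf ((c : ℂ) • A) v = c * qf A v := by
  unfold qf
  rw [Matrix.smul_mulVec, dotProduct_smul, smul_eq_mul, Complex.re_ofReal_mul]

lemma qf_sum {ι : Type*} (s : Finset ι) (f : ι → Matrix n n ℂ) (v : n → ℂ) :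
    qf (∑ z ∈ s, f z) v = ∑ z ∈ s, qf (f z) v := by
  unfold qf
  induction s using Finset.induction with
  | empty => simp [Matrix.zero_mulVec]
  | insert _ _ h ih => simp [Finset.sum_insert h, Matrix.add_mulVec, dotProduct_add, ih]

lemma mulVec_sum' {ι : Type*} (s : Finset ι) (f : ι → Matrix n n ℂ) (v : n → ℂ) :
    (∑ z ∈ s, f z) *ᵥ v = ∑ z ∈ s, (f z) *ᵥ v := by
  induction s using Finset.induction with
  | empty => simp [Matrix.zero_mulVec]
  | insert _ _ h ih => simp [Finset.sum_insert h, Matrix.add_mulVec, ih]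

lemma dot_sum' {ι : Type*} (s : Finset ι) (u : n → ℂ) (w : ι → (n → ℂ)) :
    u ⬝ᵥ (∑ z ∈ s, w z) = ∑ z ∈ s, u ⬝ᵥ w z := by
  induction s using Finset.induction with
  | empty => simp
  | insert _ _ h ih => simp [Finset.sum_insert h, dotProduct_add, ih]

lemma qf_one (v : n → ℂ) : qf 1 v = ∑ i, Complex.normSq (v i) := by
  unfold qf
  rw [Matrix.one_mulVec]
  rw [dotProduct, Complex.re_sum]
  congr 1; ext i
  simp [Complex.normSq_apply]


lemma dot_herm_star {A : Matrix n n ℂ} (hA : A.IsHermitian) (u w : n → ℂ) :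
    star w ⬝ᵥ A *ᵥ u = star (star u ⬝ᵥ A *ᵥ w) := by
  rw [star_dotProduct, Matrix.star_mulVec, hA.eq, ← Matrix.dotProduct_mulVec]

lemma re_cross {A : Matrix n n ℂ} (hA : A.IsHermitian) (u w : n → ℂ) :
    (star w ⬝ᵥ A *ᵥ u).re = (star u ⬝ᵥ A *ᵥ w).re := by
  rw [dot_herm_star hA u w, Complex.star_def, Complex.conj_re]

lemma im_qf_eq_zero {A : Matrix n n ℂ} (hA : A.IsHermitian) (v : n → ℂ) :
    (star v ⬝ᵥ A *ᵥ v).im = 0 := by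
  rw [← Complex.conj_eq_iff_im, ← Complex.star_def]
  exact (dot_herm_star hA v v).symm

lemma qf_cross_le {A : Matrix n n ℂ} (hA : A.PosSemidef) (u w : n → ℂ) {c : ℝ} (hc : 0 < c) :
    2 * (star u ⬝ᵥ A *ᵥ w).re ≤ c * qf A u + c⁻¹ * qf A w := by
  have h0 := qf_nonneg hA ((c : ℂ) • u - w)
  have hre := re_cross hA.1 u w
  have hexp : qf A ((c : ℂ) • u - w)
      = c ^ 2 * qf A u + qf A w - 2 * c * (star u ⬝ᵥ A *ᵥ w).re := by
    unfold qf
    rw [star_sub, star_smul, Matrix.mulVec_sub]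
    simp only [Matrix.mulVec_smul, sub_dotProduct, dotProduct_sub, smul_dotProduct,
      dotProduct_smul, Complex.star_def, Complex.conj_ofReal, smul_eq_mul]
    simp only [Complex.sub_re, Complex.re_ofReal_mul]
    rw [hre]
    ring
  rw [hexp] at h0
  have h2 : 2 * c * (star u ⬝ᵥ A *ᵥ w).re ≤ c ^ 2 * qf A u + qf A w := by linarith
  have := mul_le_mul_of_nonneg_left h2 (le_of_lt (inv_pos.mpr hc))
  calc 2 * (star u ⬝ᵥ A *ᵥ w).re = c⁻¹ * (2 * c * (star u ⬝ᵥ A *ᵥ w).re) := by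
        field_simp
    _ ≤ c⁻¹ * (c ^ 2 * qf A u + qf A w) := this
    _ = c * qf A u + c⁻¹ * qf A w := by field_simp


section UDU
variable (U : Matrix.unitaryGroup n ℂ)

lemma UDU_mul (f g : n → ℂ) :
    ((U : Matrix n n ℂ) * Matrix.diagonal f * star (U : Matrix n n ℂ)) *
      ((U : Matrix n n ℂ) * Matrix.diagonal g * star (U : Matrix n n ℂ))
    = (U : Matrix n n ℂ) * Matrix.diagonal (fun i => f i * g i) * star (U : Matrix n n ℂ) := by
  have h1 : star (U : Matrix n n ℂ) * (U : Matrix n n ℂ) = 1 := Unitary.coe_star_mul_self U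
  calc ((U : Matrix n n ℂ) * Matrix.diagonal f * star (U : Matrix n n ℂ)) *
      ((U : Matrix n n ℂ) * Matrix.diagonal g * star (U : Matrix n n ℂ))
      = (U : Matrix n n ℂ) * Matrix.diagonal f *
        (star (U : Matrix n n ℂ) * (U : Matrix n n ℂ)) * Matrix.diagonal g *
          star (U : Matrix n n ℂ) := by noncomm_ring
    _ = (U : Matrix n n ℂ) * (Matrix.diagonal f * Matrix.diagonal g) *
          star (U : Matrix n n ℂ) := by rw [h1]; noncomm_ring
    _ = _ := by rw [Matrix.diagonal_mul_diagonal]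

lemma UDU_one : (U : Matrix n n ℂ) * Matrix.diagonal (fun _ => (1 : ℂ)) * star (U : Matrix n n ℂ)
    = 1 := by
  rw [show Matrix.diagonal (fun _ => (1:ℂ)) = (1 : Matrix n n ℂ) from Matrix.diagonal_one,
    mul_one]
  exact Unitary.coe_mul_star_self U

lemma UDU_herm (g : n → ℝ) :
    ((U : Matrix n n ℂ) * Matrix.diagonal (fun i => (g i : ℂ)) *
      star (U : Matrix n n ℂ)).IsHermitian := by
  rw [Matrix.IsHermitian, ← Matrix.star_eq_conjTranspose]
  rw [StarMul.star_mul, StarMul.star_mul, star_star]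
  have hf : (star fun i => ((g i : ℝ) : ℂ)) = fun i => ((g i : ℝ) : ℂ) := by
    funext i
    show star ((g i : ℝ) : ℂ) = _
    rw [Complex.star_def, Complex.conj_ofReal]
  have hD : star (Matrix.diagonal fun i => (g i : ℂ)) = Matrix.diagonal fun i => (g i : ℂ) := by
    rw [Matrix.star_eq_conjTranspose, Matrix.diagonal_conjTranspose, hf]
  rw [hD, mul_assoc]

lemma UDU_smul (c : ℂ) (f : n → ℂ) :
    c • ((U : Matrix n n ℂ) * Matrix.diagonal f * star (U : Matrix n n ℂ))
    = (U : Matrix n n ℂ) * Matrix.diagonal (fun i => c * f i) * star (U : Matrix n n ℂ) := by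
  rw [show Matrix.diagonal (fun i => c * f i) = c • Matrix.diagonal f by
    rw [← Matrix.diagonal_smul]; rfl]
  rw [Matrix.mul_smul, Matrix.smul_mul]

lemma qf_UDU (g : n → ℝ) (v : n → ℂ) :
    qf ((U : Matrix n n ℂ) * Matrix.diagonal (fun i => (g i : ℂ)) * star (U : Matrix n n ℂ)) v
      = ∑ i, g i * Complex.normSq ((star (U : Matrix n n ℂ) *ᵥ v) i) := by
  unfold qf
  set w : n → ℂ := star (U : Matrix n n ℂ) *ᵥ v with hw
  have h1 : ((U : Matrix n n ℂ) * Matrix.diagonal (fun i => (g i : ℂ)) *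
      star (U : Matrix n n ℂ)) *ᵥ v
      = (U : Matrix n n ℂ) *ᵥ (Matrix.diagonal (fun i => (g i : ℂ)) *ᵥ w) := by
    rw [hw, Matrix.mulVec_mulVec, Matrix.mulVec_mulVec]
  rw [h1]
  have h2 : star v ⬝ᵥ (U : Matrix n n ℂ) *ᵥ (Matrix.diagonal (fun i => (g i : ℂ)) *ᵥ w)
      = star w ⬝ᵥ (Matrix.diagonal (fun i => (g i : ℂ)) *ᵥ w) := by
    rw [Matrix.dotProduct_mulVec]
    congr 1
    rw [hw, Matrix.star_mulVec, Matrix.star_eq_conjTranspose,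
      Matrix.conjTranspose_conjTranspose]
  rw [h2, dotProduct, Complex.re_sum]
  congr 1; funext i
  rw [Matrix.mulVec_diagonal]
  have : (star w) i = (starRingEnd ℂ) (w i) := rfl
  rw [this]
  have key : (starRingEnd ℂ) (w i) * ((g i : ℂ) * w i)
      = ((g i * Complex.normSq (w i) : ℝ) : ℂ) := by
    rw [show (starRingEnd ℂ) (w i) * ((g i : ℂ) * w i)
        = (g i : ℂ) * (w i * (starRingEnd ℂ) (w i)) by ring, Complex.mul_conj]
    push_cast; ring
  rw [key, Complex.ofReal_re]

lemma UDU_posdef {g : n → ℝ} (hg : ∀ i, 0 < g i) :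
    ((U : Matrix n n ℂ) * Matrix.diagonal (fun i => (g i : ℂ)) *
      star (U : Matrix n n ℂ)).PosDef := by
  refine Matrix.PosDef.of_dotProduct_mulVec_pos (UDU_herm U g) (fun v hv => ?_)
  have himz : ∀ z : ℂ, z.im = 0 → 0 < z.re → 0 < z := by
    intro z h1 h2; rw [Complex.lt_def]; simp [h1, h2]
  have hherm := UDU_herm U g
  set A := (U : Matrix n n ℂ) * Matrix.diagonal (fun i => (g i : ℂ)) * star (U : Matrix n n ℂ)
  have him : (star v ⬝ᵥ A *ᵥ v).im = 0 := im_qf_eq_zero hherm v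
  refine himz _ him ?_
  have hre : (star v ⬝ᵥ A *ᵥ v).re = qf A v := rfl
  rw [hre, qf_UDU]
  have hUS : (U : Matrix n n ℂ) * star (U : Matrix n n ℂ) = 1 := Unitary.coe_mul_star_self U
  have hw : star (U : Matrix n n ℂ) *ᵥ v ≠ 0 := by
    intro h
    apply hv
    have hUv : (U : Matrix n n ℂ) *ᵥ (star (U : Matrix n n ℂ) *ᵥ v) = v := by
      rw [Matrix.mulVec_mulVec, hUS, Matrix.one_mulVec]
    rw [h, Matrix.mulVec_zero] at hUv
    exact hUv.symm
  obtain ⟨i, hi⟩ : ∃ i, (star (U : Matrix n n ℂ) *ᵥ v) i ≠ 0 := by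
    by_contra h
    push_neg at h
    exact hw (funext h)
  have : 0 < g i * Complex.normSq ((star (U : Matrix n n ℂ) *ᵥ v) i) :=
    mul_pos (hg i) (Complex.normSq_pos.mpr hi)
  refine Finset.sum_pos' (fun j _ => ?_) ⟨i, Finset.mem_univ i, this⟩
  exact mul_nonneg (le_of_lt (hg j)) (Complex.normSq_nonneg _)

end UDU

section FC
variable (U : Matrix.unitaryGroup n ℂ)

lemma UDU_pow (f : n → ℂ) (k : ℕ) :
    ((U : Matrix n n ℂ) * Matrix.diagonal f * star (U : Matrix n n ℂ)) ^ k
      = (U : Matrix n n ℂ) * Matrix.diagonal (fun i => f i ^ k) * star (U : Matrix n n ℂ) := by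
  induction k with
  | zero => simp only [pow_zero]; exact (UDU_one U).symm
  | succ k ih =>
    rw [pow_succ, ih, UDU_mul]
    rw [show (fun i => f i ^ k * f i) = fun i => f i ^ (k + 1) by funext i; rw [pow_succ]]

lemma aeval_UDU (P : Polynomial ℂ) (f : n → ℂ) :
    Polynomial.aeval ((U : Matrix n n ℂ) * Matrix.diagonal f * star (U : Matrix n n ℂ)) P
      = (U : Matrix n n ℂ) * Matrix.diagonal (fun i => Polynomial.aeval (f i) P) *
          star (U : Matrix n n ℂ) := by
  induction P using Polynomial.induction_on' with
  | add p q hp hq =>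
    rw [map_add, hp, hq]
    rw [show (fun i => Polynomial.aeval (f i) (p + q))
        = fun i => Polynomial.aeval (f i) p + Polynomial.aeval (f i) q by
      funext i; rw [map_add]]
    rw [← Matrix.diagonal_add, mul_add, add_mul]
  | monomial k a =>
    have hfun : (fun i => Polynomial.aeval (f i) ((Polynomial.monomial k) a))
        = fun i => a * f i ^ k := by
      funext i; simp [Polynomial.aeval_monomial]
    rw [hfun, Polynomial.aeval_monomial, Algebra.algebraMap_eq_smul_one, UDU_pow,
      smul_mul_assoc, one_mul, UDU_smul]

lemma hermCFC_eq_of_decomp (g : ℝ → ℝ) {ω : Matrix n n ℂ} (hω : ω.IsHermitian)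
    (f : n → ℝ)
    (hdec : ω = (U : Matrix n n ℂ) * Matrix.diagonal (fun i => (f i : ℂ)) *
      star (U : Matrix n n ℂ)) :
    hermCFC g ω = (U : Matrix n n ℂ) * Matrix.diagonal (fun i => (g (f i) : ℂ)) *
      star (U : Matrix n n ℂ) := by
  classical
  set V := hω.eigenvectorUnitary with hV
  set e := hω.eigenvalues with he
  have hspec : ω = (V : Matrix n n ℂ) * Matrix.diagonal (fun i => (e i : ℂ)) *
      star (V : Matrix n n ℂ) := by
    have := hω.spectral_theorem
    rw [Unitary.conjStarAlgAut_apply] at this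
    exact this
  set s : Finset ℝ := Finset.image e Finset.univ ∪ Finset.image f Finset.univ with hs
  set P₀ : Polynomial ℝ := Lagrange.interpolate s id g with hP₀
  have heval : ∀ x ∈ s, P₀.eval x = g x := by
    intro x hx
    exact Lagrange.eval_interpolate_at_node g (Set.injOn_id _) hx
  set P : Polynomial ℂ := P₀.map (algebraMap ℝ ℂ) with hP
  have hevalC : ∀ x ∈ s, Polynomial.aeval ((x : ℝ) : ℂ) P = ((g x : ℝ) : ℂ) := by
    intro x hx
    rw [hP, Polynomial.aeval_def, Polynomial.eval₂_eq_eval_map, Polynomial.map_map]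
    have : (algebraMap ℂ ℂ).comp (algebraMap ℝ ℂ) = algebraMap ℝ ℂ := by
      ext r; simp
    rw [this]
    have : ((x : ℝ) : ℂ) = algebraMap ℝ ℂ x := rfl
    rw [this, Polynomial.eval_map, Polynomial.eval₂_at_apply]
    rw [heval x hx]
    rfl
  have key1 : Polynomial.aeval ω P = (V : Matrix n n ℂ) *
      Matrix.diagonal (fun i => (g (e i) : ℂ)) * star (V : Matrix n n ℂ) := by
    have hfun : (fun i => Polynomial.aeval ((e i : ℝ) : ℂ) P) = fun i => ((g (e i) : ℝ) : ℂ) :=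
      funext fun i => hevalC (e i)
        (Finset.mem_union_left _ (Finset.mem_image_of_mem e (Finset.mem_univ i)))
    rw [hspec, aeval_UDU, hfun]
  have key2 : Polynomial.aeval ω P = (U : Matrix n n ℂ) *
      Matrix.diagonal (fun i => (g (f i) : ℂ)) * star (U : Matrix n n ℂ) := by
    have hfun : (fun i => Polynomial.aeval ((f i : ℝ) : ℂ) P) = fun i => ((g (f i) : ℝ) : ℂ) :=
      funext fun i => hevalC (f i)
        (Finset.mem_union_right _ (Finset.mem_image_of_mem f (Finset.mem_univ i)))
    rw [hdec, aeval_UDU, hfun]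
  have hcfc : hermCFC g ω = (V : Matrix n n ℂ) *
      Matrix.diagonal (fun i => (g (e i) : ℂ)) * star (V : Matrix n n ℂ) := by
    unfold hermCFC
    rw [dif_pos hω]
  rw [hcfc, ← key1, key2]

end FC

lemma herm_spec {ω : Matrix n n ℂ} (hH : ω.IsHermitian) :
    ω = (hH.eigenvectorUnitary : Matrix n n ℂ) *
      Matrix.diagonal (fun i => ((hH.eigenvalues i : ℝ) : ℂ)) *
        star (hH.eigenvectorUnitary : Matrix n n ℂ) := by
  have := hH.spectral_theorem
  rw [Unitary.conjStarAlgAut_apply] at this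
  exact this

lemma mpow_spec {ω : Matrix n n ℂ} (hH : ω.IsHermitian) (p : ℝ) :
    mpow ω p = (hH.eigenvectorUnitary : Matrix n n ℂ) *
      Matrix.diagonal (fun i => ((hH.eigenvalues i ^ p : ℝ) : ℂ)) *
        star (hH.eigenvectorUnitary : Matrix n n ℂ) := by
  unfold mpow hermCFC
  rw [dif_pos hH]

lemma mpow_posDef {ω : Matrix n n ℂ} (hω : ω.PosDef) (p : ℝ) : (mpow ω p).PosDef := by
  rw [mpow_spec hω.1]
  exact UDU_posdef _ (fun i => Real.rpow_pos_of_pos (hω.eigenvalues_pos i) p)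

lemma qf_mpow {ω : Matrix n n ℂ} (hω : ω.IsHermitian) (p : ℝ) (v : n → ℂ) :
    qf (mpow ω p) v = ∑ i, hω.eigenvalues i ^ p *
      Complex.normSq ((star (hω.eigenvectorUnitary : Matrix n n ℂ) *ᵥ v) i) := by
  rw [mpow_spec hω]
  exact qf_UDU _ _ v

lemma smul_decomp {ω : Matrix n n ℂ} (hH : ω.IsHermitian) (c : ℝ) :
    (c : ℂ) • ω = (hH.eigenvectorUnitary : Matrix n n ℂ) *
      Matrix.diagonal (fun i => ((c * hH.eigenvalues i : ℝ) : ℂ)) *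
        star (hH.eigenvectorUnitary : Matrix n n ℂ) := by
  conv_lhs => rw [herm_spec hH]
  rw [UDU_smul]
  congr 1
  congr 1
  funext i
  push_cast
  ring

lemma smul_posDef {ω : Matrix n n ℂ} (hω : ω.PosDef) {c : ℝ} (hc : 0 < c) :
    ((c : ℂ) • ω).PosDef := by
  rw [smul_decomp hω.1 c]
  exact UDU_posdef _ (fun i => mul_pos hc (hω.eigenvalues_pos i))

lemma mpow_smul {ω : Matrix n n ℂ} (hω : ω.PosDef) {c : ℝ} (hc : 0 < c) (p : ℝ) :
    mpow ((c : ℂ) • ω) p = ((c ^ p : ℝ) : ℂ) • mpow ω p := by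
  have hherm : ((c : ℂ) • ω).IsHermitian := by
    rw [smul_decomp hω.1 c]; exact UDU_herm _ _
  have h1 : mpow ((c : ℂ) • ω) p = (hω.1.eigenvectorUnitary : Matrix n n ℂ) *
      Matrix.diagonal (fun i => (((c * hω.1.eigenvalues i) ^ p : ℝ) : ℂ)) *
        star (hω.1.eigenvectorUnitary : Matrix n n ℂ) := by
    unfold mpow
    exact hermCFC_eq_of_decomp _ (fun x => x ^ p) hherm _ (smul_decomp hω.1 c)
  rw [h1, mpow_spec hω.1, UDU_smul]
  rw [show (fun i => (((c * hω.1.eigenvalues i) ^ p : ℝ) : ℂ))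
      = fun i => ((c ^ p : ℝ) : ℂ) * ((hω.1.eigenvalues i ^ p : ℝ) : ℂ) by
    funext i
    rw [Real.mul_rpow (le_of_lt hc) (le_of_lt (hω.eigenvalues_pos i))]
    push_cast
    ring]

lemma resolvent_spec {ω : Matrix n n ℂ} (hω : ω.PosDef) {t : ℝ} (ht : 0 ≤ t) :
    ((t : ℂ) • (1 : Matrix n n ℂ) + ω)⁻¹ = (hω.1.eigenvectorUnitary : Matrix n n ℂ) *
      Matrix.diagonal (fun i => (((t + hω.1.eigenvalues i)⁻¹ : ℝ) : ℂ)) *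
        star (hω.1.eigenvectorUnitary : Matrix n n ℂ) := by
  set U := hω.1.eigenvectorUnitary
  have hsum : (t : ℂ) • (1 : Matrix n n ℂ) + ω = (U : Matrix n n ℂ) *
      Matrix.diagonal (fun i => ((t + hω.1.eigenvalues i : ℝ) : ℂ)) * star (U : Matrix n n ℂ) := by
    have h1 : (t : ℂ) • (1 : Matrix n n ℂ) = (U : Matrix n n ℂ) *
        Matrix.diagonal (fun _ => ((t : ℝ) : ℂ)) * star (U : Matrix n n ℂ) := by
      rw [show (fun _ : n => ((t : ℝ) : ℂ)) = fun i => (t : ℂ) * (fun _ : n => (1:ℂ)) i by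
        funext i; simp, ← UDU_smul, UDU_one]
    conv_lhs => rw [h1, herm_spec hω.1]
    rw [← add_mul, ← mul_add, Matrix.diagonal_add]
    congr 1
    congr 1
    funext i
    push_cast
    ring
  have hne : ∀ i, (t + hω.1.eigenvalues i) ≠ 0 :=
    fun i => ne_of_gt (add_pos_of_nonneg_of_pos ht (hω.eigenvalues_pos i))
  apply Matrix.inv_eq_right_inv
  rw [hsum, UDU_mul]
  rw [show (fun i => ((t + hω.1.eigenvalues i : ℝ) : ℂ) * (((t + hω.1.eigenvalues i)⁻¹ : ℝ) : ℂ))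
      = fun _ => (1 : ℂ) by
    funext i
    rw [← Complex.ofReal_mul, mul_inv_cancel₀ (hne i)]
    simp]
  exact UDU_one _

lemma qf_resolvent {ω : Matrix n n ℂ} (hω : ω.PosDef) {t : ℝ} (ht : 0 ≤ t) (v : n → ℂ) :
    qf (((t : ℂ) • (1 : Matrix n n ℂ) + ω)⁻¹) v = ∑ i, (t + hω.1.eigenvalues i)⁻¹ *
      Complex.normSq ((star (hω.1.eigenvectorUnitary : Matrix n n ℂ) *ᵥ v) i) := by
  rw [resolvent_spec hω ht]
  exact qf_UDU _ _ v




lemma posDef_of_qf {A : Matrix n n ℂ} (hH : A.IsHermitian)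
    (h : ∀ v, v ≠ 0 → 0 < qf A v) : A.PosDef := by
  refine Matrix.PosDef.of_dotProduct_mulVec_pos hH (fun v hv => ?_)
  rw [Complex.lt_def]
  exact ⟨h v hv, (im_qf_eq_zero hH v).symm⟩

lemma posSemidef_of_qf {A : Matrix n n ℂ} (hH : A.IsHermitian)
    (h : ∀ v, 0 ≤ qf A v) : A.PosSemidef := by
  refine Matrix.PosSemidef.of_dotProduct_mulVec_nonneg hH (fun v => ?_)
  rw [Complex.le_def]
  exact ⟨h v, (im_qf_eq_zero hH v).symm⟩

lemma smul_real_herm {A : Matrix n n ℂ} (hA : A.IsHermitian) (c : ℝ) :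
    ((c : ℂ) • A).IsHermitian := by
  rw [Matrix.IsHermitian, Matrix.conjTranspose_smul, hA.eq]
  congr 1
  simp [Complex.star_def, Complex.conj_ofReal]

lemma sum_smul_herm (M : POVM n) (lam : M.ι → ℝ) :
    (∑ z, ((lam z : ℝ) : ℂ) • M.elem z).IsHermitian := by
  rw [Matrix.IsHermitian, Matrix.conjTranspose_sum]
  congr 1
  funext z
  exact smul_real_herm (M.pos z).1 (lam z)

lemma qf_povm_sum (M : POVM n) (lam : M.ι → ℝ) (v : n → ℂ) :
    qf (∑ z, ((lam z : ℝ) : ℂ) • M.elem z) v = ∑ z, lam z * qf (M.elem z) v := by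
  rw [qf_sum]
  congr 1
  funext z
  exact qf_smul_real (lam z) (M.elem z) v

lemma qf_povm_total (M : POVM n) (v : n → ℂ) : ∑ z, qf (M.elem z) v = ∑ i, Complex.normSq (v i) := by
  rw [← qf_one v, ← M.sum_one, qf_sum]

lemma exists_qf_pos (M : POVM n) {v : n → ℂ} (hv : v ≠ 0) : ∃ z, 0 < qf (M.elem z) v := by
  by_contra h
  push_neg at h
  have h0 : ∀ z, qf (M.elem z) v = 0 := fun z => le_antisymm (h z) (qf_nonneg (M.pos z) v)
  have htot := qf_povm_total M v
  rw [Finset.sum_congr rfl (fun z _ => h0 z), Finset.sum_const, smul_zero] at htot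
  obtain ⟨i, hi⟩ : ∃ i, v i ≠ 0 := by
    by_contra hh; push_neg at hh; exact hv (funext hh)
  have : 0 < ∑ i, Complex.normSq (v i) :=
    Finset.sum_pos' (fun j _ => Complex.normSq_nonneg _)
      ⟨i, Finset.mem_univ i, Complex.normSq_pos.mpr hi⟩
  rw [← htot] at this
  exact lt_irrefl 0 this

lemma povm_sum_posDef (M : POVM n) (lam : M.ι → ℝ) (hlam : ∀ z, 0 < lam z) :
    (∑ z, ((lam z : ℝ) : ℂ) • M.elem z).PosDef := by
  refine posDef_of_qf (sum_smul_herm M lam) (fun v hv => ?_)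
  rw [qf_povm_sum]
  obtain ⟨z, hz⟩ := exists_qf_pos M hv
  refine Finset.sum_pos' (fun w _ => mul_nonneg (le_of_lt (hlam w)) (qf_nonneg (M.pos w) v))
    ⟨z, Finset.mem_univ z, mul_pos (hlam z) hz⟩

lemma povm_sum_posSemidef (M : POVM n) (lam : M.ι → ℝ) (hlam : ∀ z, 0 ≤ lam z) :
    (∑ z, ((lam z : ℝ) : ℂ) • M.elem z).PosSemidef := by
  refine posSemidef_of_qf (sum_smul_herm M lam) (fun v => ?_)
  rw [qf_povm_sum]
  exact Finset.sum_nonneg (fun z _ => mul_nonneg (hlam z) (qf_nonneg (M.pos z) v))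

lemma add_smul_one_spec {ω : Matrix n n ℂ} (hω : ω.PosDef) {t : ℝ} :
    (t : ℂ) • (1 : Matrix n n ℂ) + ω = (hω.1.eigenvectorUnitary : Matrix n n ℂ) *
      Matrix.diagonal (fun i => ((t + hω.1.eigenvalues i : ℝ) : ℂ)) *
        star (hω.1.eigenvectorUnitary : Matrix n n ℂ) := by
  set U := hω.1.eigenvectorUnitary
  have h1 : (t : ℂ) • (1 : Matrix n n ℂ) = (U : Matrix n n ℂ) *
      Matrix.diagonal (fun _ => ((t : ℝ) : ℂ)) * star (U : Matrix n n ℂ) := by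
    rw [show (fun _ : n => ((t : ℝ) : ℂ)) = fun i => (t : ℂ) * (fun _ : n => (1:ℂ)) i by
      funext i; simp, ← UDU_smul, UDU_one]
  conv_lhs => rw [h1, herm_spec hω.1]
  rw [← add_mul, ← mul_add, Matrix.diagonal_add]
  congr 1
  congr 1
  funext i
  push_cast
  ring

lemma resolvent_mul {ω : Matrix n n ℂ} (hω : ω.PosDef) {t : ℝ} (ht : 0 ≤ t) :
    ((t : ℂ) • (1 : Matrix n n ℂ) + ω) * ((t : ℂ) • (1 : Matrix n n ℂ) + ω)⁻¹ = 1 := by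
  rw [resolvent_spec hω ht]
  conv_lhs => rw [add_smul_one_spec hω]
  rw [UDU_mul]
  rw [show (fun i => ((t + hω.1.eigenvalues i : ℝ) : ℂ) * (((t + hω.1.eigenvalues i)⁻¹ : ℝ) : ℂ))
      = fun _ => (1 : ℂ) by
    funext i
    rw [← Complex.ofReal_mul, mul_inv_cancel₀
      (ne_of_gt (add_pos_of_nonneg_of_pos ht (hω.eigenvalues_pos i)))]
    simp]
  exact UDU_one _

lemma resolvent_jensen (M : POVM n) (lam : M.ι → ℝ) (hlam : ∀ z, 0 < lam z)
    {t : ℝ} (ht : 0 ≤ t) (v : n → ℂ) :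
    qf (((t : ℂ) • (1 : Matrix n n ℂ) + ∑ z, ((lam z : ℝ) : ℂ) • M.elem z)⁻¹) v
      ≤ ∑ z, (t + lam z)⁻¹ * qf (M.elem z) v := by
  set ω := ∑ z, ((lam z : ℝ) : ℂ) • M.elem z with hωdef
  have hω : ω.PosDef := povm_sum_posDef M lam hlam
  set A := (t : ℂ) • (1 : Matrix n n ℂ) + ω with hAdef
  set u := A⁻¹ *ᵥ v with hu
  have hAu : A *ᵥ u = v := by
    rw [hu, Matrix.mulVec_mulVec, resolvent_mul hω ht, Matrix.one_mulVec]
  -- L = Re (star u ⬝ᵥ v)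
  have hL : qf A⁻¹ v = (star u ⬝ᵥ v).re := by
    have h' : star v ⬝ᵥ u = star (star u ⬝ᵥ v) := star_dotProduct v u
    rw [qf, show A⁻¹ *ᵥ v = u from rfl, h', Complex.star_def, Complex.conj_re]
  -- qf A u = Re (star u ⬝ᵥ v)
  have hqfAu : qf A u = (star u ⬝ᵥ v).re := by
    rw [qf, hAu]
  -- qf A u = ∑ z, (t + lam z) * qf (M.elem z) u
  have hqfA : qf A u = ∑ z, (t + lam z) * qf (M.elem z) u := by
    rw [hAdef, qf]
    rw [Matrix.add_mulVec, dotProduct_add, Complex.add_re]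
    have h1 : (star u ⬝ᵥ ((t : ℂ) • (1 : Matrix n n ℂ)) *ᵥ u).re = t * qf 1 u := by
      rw [Matrix.smul_mulVec, dotProduct_smul, smul_eq_mul, Complex.re_ofReal_mul]
      rfl
    rw [h1]
    have h2 : (star u ⬝ᵥ ω *ᵥ u).re = ∑ z, lam z * qf (M.elem z) u := by
      rw [show (star u ⬝ᵥ ω *ᵥ u).re = qf ω u from rfl, hωdef, qf_povm_sum]
    rw [h2, qf_one, ← qf_povm_total M u]
    rw [Finset.mul_sum, ← Finset.sum_add_distrib]
    congr 1
    funext z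
    ring
  -- split star u ⬝ᵥ v over the POVM
  have hsplit : (star u ⬝ᵥ v).re = ∑ z, (star u ⬝ᵥ (M.elem z) *ᵥ v).re := by
    have h1 : v = (1 : Matrix n n ℂ) *ᵥ v := (Matrix.one_mulVec v).symm
    conv_lhs => rw [h1, ← M.sum_one]
    rw [mulVec_sum', dot_sum', Complex.re_sum]
  have hCS : ∀ z, 2 * (star u ⬝ᵥ (M.elem z) *ᵥ v).re
      ≤ (t + lam z) * qf (M.elem z) u + (t + lam z)⁻¹ * qf (M.elem z) v :=
    fun z => qf_cross_le (M.pos z) u v (add_pos_of_nonneg_of_pos ht (hlam z))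
  have h2L : 2 * (star u ⬝ᵥ v).re
      ≤ qf A u + ∑ z, (t + lam z)⁻¹ * qf (M.elem z) v := by
    rw [hsplit, Finset.mul_sum, hqfA, ← Finset.sum_add_distrib]
    exact Finset.sum_le_sum (fun z _ => hCS z)
  rw [hL]
  linarith [hqfAu, h2L]

open MeasureTheory Set

def I1 (s : ℝ) : ℝ := ∫ t in Set.Ioi (0:ℝ), t ^ (-s) * (t + 1)⁻¹

lemma ker_nonneg {s x : ℝ} (hx : 0 < x) {t : ℝ} (ht : t ∈ Set.Ioi (0:ℝ)) :
    0 ≤ t ^ (-s) * (t + x)⁻¹ := by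
  have ht' : (0:ℝ) < t := ht
  positivity

lemma ker_continuousOn {s x : ℝ} (hx : 0 < x) :
    ContinuousOn (fun t : ℝ => t ^ (-s) * (t + x)⁻¹) (Set.Ioi 0) := by
  apply ContinuousOn.mul
  · exact ContinuousOn.rpow_const continuousOn_id (fun t ht => Or.inl (ne_of_gt ht))
  · apply ContinuousOn.inv₀
    · fun_prop
    · intro t ht
      have ht' : (0:ℝ) < t := ht
      positivity

lemma ker_integrableOn {s : ℝ} (hs0 : 0 < s) (hs1 : s < 1) {x : ℝ} (hx : 0 < x) :
    MeasureTheory.IntegrableOn (fun t : ℝ => t ^ (-s) * (t + x)⁻¹) (Set.Ioi 0) := by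
  have h01 : MeasureTheory.IntegrableOn (fun t : ℝ => t ^ (-s) * (t + x)⁻¹) (Set.Ioc 0 1) := by
    have hbase : MeasureTheory.IntegrableOn (fun t : ℝ => t ^ (-s) * x⁻¹) (Set.Ioc 0 1) := by
      have h1 : IntervalIntegrable (fun t : ℝ => t ^ (-s)) MeasureTheory.volume 0 1 :=
        intervalIntegral.intervalIntegrable_rpow' (by linarith)
      rw [intervalIntegrable_iff, Set.uIoc_of_le zero_le_one] at h1
      exact h1.mul_const _
    refine MeasureTheory.Integrable.mono' hbase ?_ ?_
    · exact ((ker_continuousOn hx).mono Set.Ioc_subset_Ioi_self).aestronglyMeasurable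
        measurableSet_Ioc
    · refine (MeasureTheory.ae_restrict_iff' measurableSet_Ioc).mpr (.of_forall fun t ht => ?_)
      have ht0 : (0:ℝ) < t := ht.1
      rw [Real.norm_eq_abs, abs_of_nonneg (ker_nonneg hx ht0)]
      have h2 : (t + x)⁻¹ ≤ x⁻¹ := by
        apply inv_anti₀ hx
        linarith
      exact mul_le_mul_of_nonneg_left h2 (Real.rpow_nonneg (le_of_lt ht0) _)
  have h1i : MeasureTheory.IntegrableOn (fun t : ℝ => t ^ (-s) * (t + x)⁻¹) (Set.Ioi 1) := by
    have hbase : MeasureTheory.IntegrableOn (fun t : ℝ => t ^ (-s - 1)) (Set.Ioi 1) :=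
      integrableOn_Ioi_rpow_of_lt (by linarith) one_pos
    refine MeasureTheory.Integrable.mono' hbase ?_ ?_
    · exact ((ker_continuousOn hx).mono (fun t (ht : t ∈ Set.Ioi (1:ℝ)) =>
        (lt_trans one_pos ht : (0:ℝ) < t))).aestronglyMeasurable measurableSet_Ioi
    · refine (MeasureTheory.ae_restrict_iff' measurableSet_Ioi).mpr (.of_forall fun t ht => ?_)
      have ht1 : (1:ℝ) < t := ht
      have ht0 : (0:ℝ) < t := lt_trans one_pos ht1
      rw [Real.norm_eq_abs, abs_of_nonneg (ker_nonneg hx ht0)]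
      have h2 : (t + x)⁻¹ ≤ t⁻¹ := by
        apply inv_anti₀ ht0
        linarith
      calc t ^ (-s) * (t + x)⁻¹ ≤ t ^ (-s) * t⁻¹ :=
            mul_le_mul_of_nonneg_left h2 (Real.rpow_nonneg (le_of_lt ht0) _)
        _ = t ^ (-s - 1) := by
            rw [Real.rpow_sub ht0, Real.rpow_one]
            ring
  have hunion : Set.Ioc (0:ℝ) 1 ∪ Set.Ioi 1 = Set.Ioi 0 := Set.Ioc_union_Ioi_eq_Ioi zero_le_one
  rw [← hunion]
  exact h01.union h1i

lemma ker_integral_eq {s : ℝ} (hs0 : 0 < s) (hs1 : s < 1) {x : ℝ} (hx : 0 < x) :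
    ∫ t in Set.Ioi (0:ℝ), t ^ (-s) * (t + x)⁻¹ = x ^ (-s) * I1 s := by
  have hsub := MeasureTheory.integral_comp_mul_left_Ioi
    (fun t : ℝ => t ^ (-s) * (t + x)⁻¹) 0 hx
  rw [mul_zero] at hsub
  have hcong : Set.EqOn (fun u : ℝ => (x * u) ^ (-s) * (x * u + x)⁻¹)
      (fun u : ℝ => (x ^ (-s) * x⁻¹) * (u ^ (-s) * (u + 1)⁻¹)) (Set.Ioi 0) := by
    intro u hu
    have hu' : (0:ℝ) < u := hu
    simp only
    rw [Real.mul_rpow (le_of_lt hx) (le_of_lt hu')]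
    rw [show x * u + x = x * (u + 1) by ring, mul_inv]
    ring
  rw [MeasureTheory.setIntegral_congr_fun measurableSet_Ioi hcong] at hsub
  rw [MeasureTheory.integral_const_mul] at hsub
  have hxne : x ≠ 0 := ne_of_gt hx
  have hfin : x ^ (-s) * x⁻¹ * I1 s = x⁻¹ * ∫ t in Set.Ioi (0:ℝ), t ^ (-s) * (t + x)⁻¹ := by
    rw [I1, hsub, smul_eq_mul]
  have := congrArg (fun y => x * y) hfin
  calc ∫ t in Set.Ioi (0:ℝ), t ^ (-s) * (t + x)⁻¹
      = x * (x⁻¹ * ∫ t in Set.Ioi (0:ℝ), t ^ (-s) * (t + x)⁻¹) := by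
        field_simp
    _ = x * (x ^ (-s) * x⁻¹ * I1 s) := by rw [← hfin]
    _ = x ^ (-s) * I1 s := by field_simp

lemma I1_pos {s : ℝ} (hs0 : 0 < s) (hs1 : s < 1) : 0 < I1 s := by
  rw [I1]
  rw [MeasureTheory.setIntegral_pos_iff_support_of_nonneg_ae ?hnn (ker_integrableOn hs0 hs1 one_pos)]
  case hnn =>
    exact (MeasureTheory.ae_restrict_iff' measurableSet_Ioi).mpr
      (.of_forall fun t ht => ker_nonneg one_pos ht)
  have hsub : Set.Ioi (0:ℝ) ⊆ Function.support (fun t : ℝ => t ^ (-s) * (t + 1)⁻¹) := by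
    intro t ht
    have ht' : (0:ℝ) < t := ht
    have : 0 < t ^ (-s) * (t + 1)⁻¹ := by positivity
    exact ne_of_gt this
  rw [Set.inter_eq_right.mpr hsub]
  rw [Real.volume_Ioi]
  exact ENNReal.zero_lt_top

lemma rpow_neg_eq_integral {s : ℝ} (hs0 : 0 < s) (hs1 : s < 1) {x : ℝ} (hx : 0 < x) :
    x ^ (-s) = (I1 s)⁻¹ * ∫ t in Set.Ioi (0:ℝ), t ^ (-s) * (t + x)⁻¹ := by
  rw [ker_integral_eq hs0 hs1 hx]
  field_simp [ne_of_gt (I1_pos hs0 hs1)]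

open MeasureTheory Set

lemma qf_mpow_jensen (M : POVM n) (lam : M.ι → ℝ) (hlam : ∀ z, 0 < lam z)
    {s : ℝ} (hs0 : 0 < s) (hs1 : s ≤ 1) (v : n → ℂ) :
    qf (mpow (∑ z, ((lam z : ℝ) : ℂ) • M.elem z) (-s)) v
      ≤ ∑ z, lam z ^ (-s) * qf (M.elem z) v := by
  set ω := ∑ z, ((lam z : ℝ) : ℂ) • M.elem z with hωdef
  have hω : ω.PosDef := povm_sum_posDef M lam hlam
  set e := hω.1.eigenvalues with he
  set w : n → ℝ := fun i =>
    Complex.normSq ((star (hω.1.eigenvectorUnitary : Matrix n n ℂ) *ᵥ v) i) with hwdef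
  have hwn : ∀ i, 0 ≤ w i := fun i => Complex.normSq_nonneg _
  have hepos : ∀ i, 0 < e i := fun i => hω.eigenvalues_pos i
  have hLHS : qf (mpow ω (-s)) v = ∑ i, e i ^ (-s) * w i := qf_mpow hω.1 (-s) v
  rcases eq_or_lt_of_le hs1 with h1 | h1
  · -- s = 1
    subst h1
    have key := resolvent_jensen M lam hlam (t := 0) le_rfl v
    have hqr := qf_resolvent hω (t := 0) le_rfl v
    rw [hLHS]
    have heq : ∑ i, e i ^ (-(1:ℝ)) * w i
        = qf ((((0:ℝ) : ℂ)) • (1 : Matrix n n ℂ) + ω)⁻¹ v := by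
      rw [hqr]
      congr 1
      funext i
      rw [Real.rpow_neg_one, zero_add]
    rw [heq]
    refine le_trans key (le_of_eq ?_)
    congr 1
    funext z
    rw [Real.rpow_neg_one, zero_add]
  · -- s < 1
    set F : n → ℝ → ℝ := fun i t => t ^ (-s) * (t + e i)⁻¹ * w i with hF
    set G : M.ι → ℝ → ℝ := fun z t => t ^ (-s) * (t + lam z)⁻¹ * qf (M.elem z) v with hG
    have hFint : ∀ i, MeasureTheory.IntegrableOn (F i) (Set.Ioi 0) := fun i => by
      have := (ker_integrableOn hs0 h1 (hepos i)).mul_const (w i)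
      exact this
    have hGint : ∀ z, MeasureTheory.IntegrableOn (G z) (Set.Ioi 0) := fun z => by
      have := (ker_integrableOn hs0 h1 (hlam z)).mul_const (qf (M.elem z) v)
      exact this
    have hI1 : 0 < I1 s := I1_pos hs0 h1
    have hL2 : qf (mpow ω (-s)) v = (I1 s)⁻¹ * ∫ t in Set.Ioi (0:ℝ), ∑ i, F i t := by
      rw [hLHS]
      have h1i : ∀ i, e i ^ (-s) * w i = (I1 s)⁻¹ * ∫ t in Set.Ioi (0:ℝ), F i t := by
        intro i
        rw [rpow_neg_eq_integral hs0 h1 (hepos i)]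
        rw [show (∫ t in Set.Ioi (0:ℝ), F i t)
            = (∫ t in Set.Ioi (0:ℝ), t ^ (-s) * (t + e i)⁻¹) * w i from
          MeasureTheory.integral_mul_const (w i) _]
        ring
      rw [Finset.sum_congr rfl (fun i _ => h1i i), ← Finset.mul_sum]
      congr 1
      exact (MeasureTheory.integral_finset_sum Finset.univ (fun i _ => hFint i)).symm
    have hmono : (∫ t in Set.Ioi (0:ℝ), ∑ i, F i t)
        ≤ ∫ t in Set.Ioi (0:ℝ), ∑ z, G z t := by
      refine MeasureTheory.setIntegral_mono_on
        (MeasureTheory.integrable_finset_sum Finset.univ (fun i _ => hFint i))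
        (MeasureTheory.integrable_finset_sum Finset.univ (fun z _ => hGint z))
        measurableSet_Ioi (fun t ht => ?_)
      have ht0 : (0:ℝ) < t := ht
      have hqr := qf_resolvent hω (le_of_lt ht0) v
      have hrj := resolvent_jensen M lam hlam (le_of_lt ht0) v
      have hts : 0 ≤ t ^ (-s) := Real.rpow_nonneg (le_of_lt ht0) _
      calc ∑ i, F i t = t ^ (-s) * qf (((t : ℂ) • (1 : Matrix n n ℂ) + ω)⁻¹) v := by
            rw [hqr, Finset.mul_sum]
            congr 1
            funext i
            simp only [hF]
            ring
        _ ≤ t ^ (-s) * ∑ z, (t + lam z)⁻¹ * qf (M.elem z) v :=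
            mul_le_mul_of_nonneg_left hrj hts
        _ = ∑ z, G z t := by
            rw [Finset.mul_sum]
            congr 1
            funext z
            simp only [hG]
            ring
    have hRHS : (∫ t in Set.Ioi (0:ℝ), ∑ z, G z t)
        = ∑ z, (lam z ^ (-s) * I1 s) * qf (M.elem z) v := by
      rw [MeasureTheory.integral_finset_sum Finset.univ (fun z _ => hGint z)]
      congr 1
      funext z
      rw [show (∫ t in Set.Ioi (0:ℝ), G z t)
          = (∫ t in Set.Ioi (0:ℝ), t ^ (-s) * (t + lam z)⁻¹) * qf (M.elem z) v from
        MeasureTheory.integral_mul_const _ _]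
      rw [ker_integral_eq hs0 h1 (hlam z)]
    rw [hL2]
    calc (I1 s)⁻¹ * ∫ t in Set.Ioi (0:ℝ), ∑ i, F i t
        ≤ (I1 s)⁻¹ * ∫ t in Set.Ioi (0:ℝ), ∑ z, G z t :=
          mul_le_mul_of_nonneg_left hmono (le_of_lt (inv_pos.mpr hI1))
      _ = ∑ z, lam z ^ (-s) * qf (M.elem z) v := by
          rw [hRHS, Finset.mul_sum]
          congr 1
          funext z
          field_simp


lemma tr2_eq_sum_qf {ρ : Matrix n n ℂ} (hρ : ρ.IsHermitian) (X : Matrix n n ℂ) :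
    tr2 ρ X = ∑ j, hρ.eigenvalues j *
      qf X (fun i => (hρ.eigenvectorUnitary : Matrix n n ℂ) i j) := by
  set U := (hρ.eigenvectorUnitary : Matrix n n ℂ) with hU
  set D := Matrix.diagonal (fun i => ((hρ.eigenvalues i : ℝ) : ℂ)) with hD
  have h1 : (ρ * X).trace = (D * (star U * X * U)).trace := by
    conv_lhs => rw [herm_spec hρ]
    rw [show (U * D * star U) * X = U * (D * (star U * X)) by noncomm_ring]
    rw [Matrix.trace_mul_comm]
    rw [show D * (star U * X) * U = D * (star U * X * U) by noncomm_ring]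
  have h2 : (D * (star U * X * U)).trace = ∑ j, ((hρ.eigenvalues j : ℝ) : ℂ) *
      (star U * X * U) j j := by
    rw [Matrix.trace]
    congr 1
    funext j
    rw [Matrix.diag_apply, hD, Matrix.diagonal_mul]
  have h3 : ∀ j, (star U * X * U) j j
      = star (fun i => U i j) ⬝ᵥ X *ᵥ (fun i => U i j) := by
    intro j
    rw [show star U * X * U = star U * (X * U) by noncomm_ring]
    simp only [Matrix.mul_apply, Matrix.star_apply, dotProduct, Matrix.mulVec, Pi.star_apply]
  rw [tr2, h1, h2, Complex.re_sum]
  congr 1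
  funext j
  rw [h3 j, Complex.re_ofReal_mul]
  rfl

lemma trace_eq_sum_eig {ρ : Matrix n n ℂ} (hρ : ρ.IsHermitian) :
    ρ.trace = ∑ j, ((hρ.eigenvalues j : ℝ) : ℂ) := by
  conv_lhs => rw [herm_spec hρ]
  rw [Matrix.trace_mul_comm]
  rw [show star (hρ.eigenvectorUnitary : Matrix n n ℂ) * ((hρ.eigenvectorUnitary : Matrix n n ℂ) *
    Matrix.diagonal (fun i => ((hρ.eigenvalues i : ℝ) : ℂ)))
      = (star (hρ.eigenvectorUnitary : Matrix n n ℂ) * (hρ.eigenvectorUnitary : Matrix n n ℂ)) *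
        Matrix.diagonal (fun i => ((hρ.eigenvalues i : ℝ) : ℂ)) by noncomm_ring]
  rw [Unitary.coe_star_mul_self, one_mul, Matrix.trace_diagonal]

lemma eigcol_ne_zero {ρ : Matrix n n ℂ} (hρ : ρ.IsHermitian) (j : n) :
    (fun i => (hρ.eigenvectorUnitary : Matrix n n ℂ) i j) ≠ 0 := by
  intro h
  have h1 : (star (hρ.eigenvectorUnitary : Matrix n n ℂ) *
      (hρ.eigenvectorUnitary : Matrix n n ℂ)) j j = 1 := by
    rw [Unitary.coe_star_mul_self]
    simp [Matrix.one_apply]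
  rw [Matrix.mul_apply] at h1
  have h2 : ∀ k, (hρ.eigenvectorUnitary : Matrix n n ℂ) k j = 0 := fun k => congrFun h k
  rw [Finset.sum_congr rfl (fun k _ => by rw [h2 k, mul_zero])] at h1
  simp at h1

lemma tr2_nonneg {ρ X : Matrix n n ℂ} (hρ : ρ.PosSemidef) (hX : X.PosSemidef) :
    0 ≤ tr2 ρ X := by
  rw [tr2_eq_sum_qf hρ.1]
  exact Finset.sum_nonneg fun j _ =>
    mul_nonneg (hρ.eigenvalues_nonneg j) (qf_nonneg hX _)

lemma tr2_pos {ρ X : Matrix n n ℂ} (hρ : ρ.PosSemidef) (htr : ρ.trace = 1) (hX : X.PosDef) :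
    0 < tr2 ρ X := by
  rw [tr2_eq_sum_qf hρ.1]
  have hsum : ∑ j, hρ.1.eigenvalues j = 1 := by
    have := trace_eq_sum_eig hρ.1
    rw [htr] at this
    have h2 := congrArg Complex.re this
    rw [Complex.re_sum] at h2
    simp only [Complex.ofReal_re] at h2
    simpa using h2.symm
  obtain ⟨j, hj⟩ : ∃ j, 0 < hρ.1.eigenvalues j := by
    by_contra h
    push_neg at h
    have h0 : ∀ j, hρ.1.eigenvalues j = 0 :=
      fun j => le_antisymm (h j) (hρ.eigenvalues_nonneg j)
    rw [Finset.sum_congr rfl (fun j _ => h0 j), Finset.sum_const, smul_zero] at hsum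
    norm_num at hsum
  refine Finset.sum_pos' (fun k _ => mul_nonneg (hρ.eigenvalues_nonneg k) (qf_nonneg hX.posSemidef _))
    ⟨j, Finset.mem_univ j, mul_pos hj (qf_pos hX (eigcol_ne_zero hρ.1 j))⟩

lemma tr2_smul_real (A B : Matrix n n ℂ) (c : ℝ) :
    tr2 A ((c : ℂ) • B) = c * tr2 A B := by
  rw [tr2, tr2, Matrix.mul_smul, Matrix.trace_smul, smul_eq_mul, Complex.re_ofReal_mul]

lemma tr2_sum {ι : Type*} (A : Matrix n n ℂ) (s : Finset ι) (f : ι → Matrix n n ℂ) :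
    tr2 A (∑ z ∈ s, f z) = ∑ z ∈ s, tr2 A (f z) := by
  rw [tr2, Finset.mul_sum, Matrix.trace_sum, Complex.re_sum]
  rfl

lemma tr2_mpow_jensen {ρ : Matrix n n ℂ} (hρ : ρ.PosSemidef) (M : POVM n) (lam : M.ι → ℝ)
    (hlam : ∀ z, 0 < lam z) {s : ℝ} (hs0 : 0 < s) (hs1 : s ≤ 1) :
    tr2 ρ (mpow (∑ z, ((lam z : ℝ) : ℂ) • M.elem z) (-s))
      ≤ ∑ z, lam z ^ (-s) * tr2 ρ (M.elem z) := by
  rw [tr2_eq_sum_qf hρ.1]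
  have hswap : ∑ z, lam z ^ (-s) * tr2 ρ (M.elem z)
      = ∑ j, hρ.1.eigenvalues j * ∑ z, lam z ^ (-s) *
        qf (M.elem z) (fun i => (hρ.1.eigenvectorUnitary : Matrix n n ℂ) i j) := by
    rw [Finset.sum_congr rfl (fun z (_ : z ∈ Finset.univ) => by rw [tr2_eq_sum_qf hρ.1])]
    calc ∑ z, lam z ^ (-s) * ∑ j, hρ.1.eigenvalues j *
          qf (M.elem z) (fun i => (hρ.1.eigenvectorUnitary : Matrix n n ℂ) i j)
        = ∑ z, ∑ j, lam z ^ (-s) * (hρ.1.eigenvalues j *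
          qf (M.elem z) (fun i => (hρ.1.eigenvectorUnitary : Matrix n n ℂ) i j)) := by
          congr 1; funext z; rw [Finset.mul_sum]
      _ = ∑ j, ∑ z, lam z ^ (-s) * (hρ.1.eigenvalues j *
          qf (M.elem z) (fun i => (hρ.1.eigenvectorUnitary : Matrix n n ℂ) i j)) :=
          Finset.sum_comm
      _ = ∑ j, hρ.1.eigenvalues j * ∑ z, lam z ^ (-s) *
          qf (M.elem z) (fun i => (hρ.1.eigenvectorUnitary : Matrix n n ℂ) i j) := by
          congr 1; funext j; rw [Finset.mul_sum]; congr 1; funext z; ring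
  rw [hswap]
  refine Finset.sum_le_sum fun j _ => ?_
  exact mul_le_mul_of_nonneg_left (qf_mpow_jensen M lam hlam hs0 hs1 _)
    (hρ.eigenvalues_nonneg j)




lemma pow_ratio_exp {x y α : ℝ} (hx : 0 < x) (hy : 0 < y) (hα : 0 < α) :
    ((x / y) ^ α) ^ ((α - 1) / α) = x ^ (α - 1) * y ^ (1 - α) := by
  rw [← Real.rpow_mul (le_of_lt (div_pos hx hy))]
  rw [show α * ((α - 1) / α) = α - 1 by field_simp]
  rw [Real.div_rpow (le_of_lt hx) (le_of_lt hy)]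
  rw [div_eq_mul_inv, ← Real.rpow_neg (le_of_lt hy), neg_sub]

lemma ratio_pow {x y α : ℝ} (hx : 0 < x) (hy : 0 < y) :
    (x / y) ^ α = x ^ α * y ^ (-α) := by
  rw [Real.div_rpow (le_of_lt hx) (le_of_lt hy), div_eq_mul_inv, ← Real.rpow_neg (le_of_lt hy)]

lemma scalar_eq {x y α : ℝ} (hx : 0 < x) (hy : 0 < y) (hα : 0 < α) :
    α * ((x / y) ^ α) ^ ((α - 1) / α) * x + (1 - α) * ((x / y) ^ α) * y
      = x ^ α * y ^ (1 - α) := by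
  rw [pow_ratio_exp hx hy hα, ratio_pow hx hy]
  have h1 : x ^ (α - 1) * x = x ^ α := by
    have h := Real.rpow_add_one (ne_of_gt hx) (α - 1)
    rw [sub_add_cancel] at h
    exact h.symm
  have h2 : y ^ (-α) * y = y ^ (1 - α) := by
    have h := Real.rpow_add_one (ne_of_gt hy) (-α)
    rw [neg_add_eq_sub] at h
    exact h.symm
  calc α * (x ^ (α - 1) * y ^ (1 - α)) * x + (1 - α) * (x ^ α * y ^ (-α)) * y
      = α * ((x ^ (α - 1) * x) * y ^ (1 - α)) + (1 - α) * (x ^ α * (y ^ (-α) * y)) := by ring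
    _ = x ^ α * y ^ (1 - α) := by rw [h1, h2]; ring

lemma scalar_le {x y a b α : ℝ} (hx : 0 < x) (hy : 0 < y) (hα : 0 < α) (hα1 : α < 1)
    (ha : 0 ≤ a) (hb : 0 ≤ b) (hax : a ≤ x) (hby : b ≤ y) :
    α * ((x / y) ^ α) ^ ((α - 1) / α) * a + (1 - α) * ((x / y) ^ α) * b
      ≤ x ^ α * y ^ (1 - α) := by
  rw [← scalar_eq hx hy hα]
  have hc1 : 0 ≤ α * ((x / y) ^ α) ^ ((α - 1) / α) :=
    mul_nonneg (le_of_lt hα)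
      (Real.rpow_nonneg (Real.rpow_nonneg (le_of_lt (div_pos hx hy)) _) _)
  have hc2 : 0 ≤ (1 - α) * ((x / y) ^ α) :=
    mul_nonneg (by linarith) (Real.rpow_nonneg (le_of_lt (div_pos hx hy)) _)
  have t1 := mul_le_mul_of_nonneg_left hax hc1
  have t2 := mul_le_mul_of_nonneg_left hby hc2
  linarith

theorem stmt1 (d : ℕ) (ρ σ : Matrix (Fin d) (Fin d) ℂ)
    (hρ : ρ.PosSemidef) (hρ1 : ρ.trace = 1) (hσ : σ.PosSemidef) (hσ1 : σ.trace = 1)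
    (𝓜 : Set (POVM (Fin d))) (h𝓜 : 𝓜.Nonempty) (α : ℝ) (hα : α ∈ Set.Ico (1 / 2 : ℝ) 1) :
    sInf {x : ℝ | ∃ ω : Matrix (Fin d) (Fin d) ℂ, ω.PosDef ∧ ω ∈ cone 𝓜 ∧
        x = α * tr2 ρ (mpow ω ((α - 1) / α)) + (1 - α) * tr2 σ ω}
      ≤ sInf {x : ℝ | ∃ M ∈ 𝓜, x = Qclass α (M.dist ρ) (M.dist σ)} ∧
    sInf {x : ℝ | ∃ ω : Matrix (Fin d) (Fin d) ℂ, ω.PosDef ∧ ω ∈ cone 𝓜 ∧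
        x = α * tr2 ρ (mpow ω ((α - 1) / α)) + (1 - α) * tr2 σ ω}
      = sInf {x : ℝ | ∃ ω : Matrix (Fin d) (Fin d) ℂ, ω.PosDef ∧ ω ∈ cone 𝓜 ∧
        x = tr2 ρ (mpow ω ((α - 1) / α)) ^ α * tr2 σ ω ^ (1 - α)} := by
  obtain ⟨M₀, hM₀⟩ := h𝓜
  obtain ⟨hα2, hα1⟩ := hα
  have hα0 : (0:ℝ) < α := lt_of_lt_of_le (by norm_num) hα2
  have h1α : (0:ℝ) < 1 - α := by linarith
  have hps : (α - 1) / α = -((1 - α) / α) := by ring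
  have hs0 : 0 < (1 - α) / α := div_pos h1α hα0
  have hs1 : (1 - α) / α ≤ 1 := by rw [div_le_one hα0]; linarith
  set S1 := {x : ℝ | ∃ ω : Matrix (Fin d) (Fin d) ℂ, ω.PosDef ∧ ω ∈ cone 𝓜 ∧
      x = α * tr2 ρ (mpow ω ((α - 1) / α)) + (1 - α) * tr2 σ ω} with hS1def
  set S2 := {x : ℝ | ∃ ω : Matrix (Fin d) (Fin d) ℂ, ω.PosDef ∧ ω ∈ cone 𝓜 ∧
      x = tr2 ρ (mpow ω ((α - 1) / α)) ^ α * tr2 σ ω ^ (1 - α)} with hS2def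
  have hone_cone : (1 : Matrix (Fin d) (Fin d) ℂ) ∈ cone 𝓜 := by
    refine ⟨M₀, hM₀, fun _ => 1, fun z => zero_le_one, ?_⟩
    rw [← M₀.sum_one]
    congr 1
    funext z
    rw [Complex.ofReal_one, one_smul]
  have hS1ne : S1.Nonempty :=
    ⟨α * tr2 ρ (mpow 1 ((α - 1) / α)) + (1 - α) * tr2 σ 1, 1, Matrix.PosDef.one, hone_cone, rfl⟩
  have hS2ne : S2.Nonempty :=
    ⟨tr2 ρ (mpow 1 ((α - 1) / α)) ^ α * tr2 σ 1 ^ (1 - α), 1, Matrix.PosDef.one, hone_cone, rfl⟩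
  have hS1bdd : BddBelow S1 := by
    refine ⟨0, fun x hx => ?_⟩
    obtain ⟨ω, hPD, hc, rfl⟩ := hx
    have h1 : 0 ≤ tr2 ρ (mpow ω ((α - 1) / α)) :=
      tr2_nonneg hρ (mpow_posDef hPD _).posSemidef
    have h2 : 0 ≤ tr2 σ ω := tr2_nonneg hσ hPD.posSemidef
    have := mul_nonneg hα0.le h1
    have := mul_nonneg h1α.le h2
    linarith
  have hS2bdd : BddBelow S2 := by
    refine ⟨0, fun x hx => ?_⟩
    obtain ⟨ω, hPD, hc, rfl⟩ := hx
    exact mul_nonneg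
      (Real.rpow_nonneg (tr2_nonneg hρ (mpow_posDef hPD _).posSemidef) _)
      (Real.rpow_nonneg (tr2_nonneg hσ hPD.posSemidef) _)
  constructor
  · -- Part 1
    refine le_csInf ⟨Qclass α (M₀.dist ρ) (M₀.dist σ), M₀, hM₀, rfl⟩ ?_
    rintro b ⟨M, hM, rfl⟩
    have hμ : ∀ z, 0 ≤ M.dist ρ z := fun z => tr2_nonneg hρ (M.pos z)
    have hν : ∀ z, 0 ≤ M.dist σ z := fun z => tr2_nonneg hσ (M.pos z)
    have hF : Filter.Tendsto
        (fun δ : ℝ => ∑ z, (M.dist ρ z + δ) ^ α * (M.dist σ z + δ) ^ (1 - α))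
        (nhdsWithin 0 (Set.Ioi 0)) (nhds (Qclass α (M.dist ρ) (M.dist σ))) := by
      have hQ : Qclass α (M.dist ρ) (M.dist σ)
          = ∑ z, (M.dist ρ z + 0) ^ α * (M.dist σ z + 0) ^ (1 - α) := by
        rw [Qclass]
        congr 1
        funext z
        rw [add_zero, add_zero]
      rw [hQ]
      refine tendsto_finset_sum _ (fun z _ => ?_)
      have hμt : Filter.Tendsto (fun δ : ℝ => M.dist ρ z + δ)
          (nhdsWithin 0 (Set.Ioi 0)) (nhds (M.dist ρ z + 0)) :=
        ((tendsto_const_nhds.add Filter.tendsto_id)).mono_left nhdsWithin_le_nhds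
      have hνt : Filter.Tendsto (fun δ : ℝ => M.dist σ z + δ)
          (nhdsWithin 0 (Set.Ioi 0)) (nhds (M.dist σ z + 0)) :=
        ((tendsto_const_nhds.add Filter.tendsto_id)).mono_left nhdsWithin_le_nhds
      exact Filter.Tendsto.mul
        (((Real.continuousAt_rpow_const _ α (Or.inr hα0.le)).tendsto).comp hμt)
        (((Real.continuousAt_rpow_const _ (1 - α) (Or.inr h1α.le)).tendsto).comp hνt)
    refine ge_of_tendsto hF (eventually_nhdsWithin_of_forall fun δ hδ => ?_)
    have hδ0 : (0:ℝ) < δ := hδ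
    set lam : M.ι → ℝ := fun z => ((M.dist ρ z + δ) / (M.dist σ z + δ)) ^ α with hlamdef
    have hlam : ∀ z, 0 < lam z := fun z =>
      Real.rpow_pos_of_pos (div_pos (by linarith [hμ z]) (by linarith [hν z])) α
    have hPD := povm_sum_posDef M lam hlam
    have hcone : (∑ z, ((lam z : ℝ) : ℂ) • M.elem z) ∈ cone 𝓜 :=
      ⟨M, hM, lam, fun z => (hlam z).le, rfl⟩
    have hmem : α * tr2 ρ (mpow (∑ z, ((lam z : ℝ) : ℂ) • M.elem z) ((α - 1) / α))
        + (1 - α) * tr2 σ (∑ z, ((lam z : ℝ) : ℂ) • M.elem z) ∈ S1 :=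
      ⟨_, hPD, hcone, rfl⟩
    refine le_trans (csInf_le hS1bdd hmem) ?_
    have hj : tr2 ρ (mpow (∑ z, ((lam z : ℝ) : ℂ) • M.elem z) ((α - 1) / α))
        ≤ ∑ z, lam z ^ ((α - 1) / α) * tr2 ρ (M.elem z) := by
      rw [hps]
      exact tr2_mpow_jensen hρ M lam hlam hs0 hs1
    have hσω : tr2 σ (∑ z, ((lam z : ℝ) : ℂ) • M.elem z)
        = ∑ z, lam z * tr2 σ (M.elem z) := by
      rw [tr2_sum]
      congr 1
      funext z
      rw [tr2_smul_real]
    calc α * tr2 ρ (mpow (∑ z, ((lam z : ℝ) : ℂ) • M.elem z) ((α - 1) / α))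
          + (1 - α) * tr2 σ (∑ z, ((lam z : ℝ) : ℂ) • M.elem z)
        ≤ α * (∑ z, lam z ^ ((α - 1) / α) * tr2 ρ (M.elem z))
          + (1 - α) * (∑ z, lam z * tr2 σ (M.elem z)) := by
          have := mul_le_mul_of_nonneg_left hj hα0.le
          rw [hσω]
          linarith
      _ = ∑ z, (α * (lam z ^ ((α - 1) / α) * tr2 ρ (M.elem z))
            + (1 - α) * (lam z * tr2 σ (M.elem z))) := by
          rw [Finset.mul_sum, Finset.mul_sum, ← Finset.sum_add_distrib]
      _ ≤ ∑ z, (M.dist ρ z + δ) ^ α * (M.dist σ z + δ) ^ (1 - α) := by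
          refine Finset.sum_le_sum fun z _ => ?_
          have haz : tr2 ρ (M.elem z) = M.dist ρ z := rfl
          have hbz : tr2 σ (M.elem z) = M.dist σ z := rfl
          have := scalar_le (x := M.dist ρ z + δ) (y := M.dist σ z + δ)
            (a := tr2 ρ (M.elem z)) (b := tr2 σ (M.elem z)) (α := α)
            (by linarith [hμ z]) (by linarith [hν z]) hα0 hα1
            (tr2_nonneg hρ (M.pos z)) (tr2_nonneg hσ (M.pos z))
            (by rw [haz]; linarith) (by rw [hbz]; linarith)
          calc α * (lam z ^ ((α - 1) / α) * tr2 ρ (M.elem z))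
                + (1 - α) * (lam z * tr2 σ (M.elem z))
              = α * (((M.dist ρ z + δ) / (M.dist σ z + δ)) ^ α) ^ ((α - 1) / α)
                  * tr2 ρ (M.elem z)
                + (1 - α) * (((M.dist ρ z + δ) / (M.dist σ z + δ)) ^ α)
                  * tr2 σ (M.elem z) := by
                rw [hlamdef]
                ring
            _ ≤ (M.dist ρ z + δ) ^ α * (M.dist σ z + δ) ^ (1 - α) := this
  · -- Part 2
    refine le_antisymm ?_ ?_
    · -- sInf S1 ≤ sInf S2
      refine le_csInf hS2ne ?_
      rintro y ⟨ω, hPD, hcone, rfl⟩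
      have hA : 0 < tr2 ρ (mpow ω ((α - 1) / α)) := tr2_pos hρ hρ1 (mpow_posDef hPD _)
      have hB : 0 < tr2 σ ω := tr2_pos hσ hσ1 hPD
      set A := tr2 ρ (mpow ω ((α - 1) / α)) with hAdef
      set B := tr2 σ ω with hBdef
      have hc : 0 < (A / B) ^ α := Real.rpow_pos_of_pos (div_pos hA hB) α
      have hcone' : ((((A / B) ^ α : ℝ)) : ℂ) • ω ∈ cone 𝓜 := by
        obtain ⟨M, hM, lam, hlam, hωeq⟩ := hcone
        refine ⟨M, hM, fun z => (A / B) ^ α * lam z,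
          fun z => mul_nonneg hc.le (hlam z), ?_⟩
        rw [hωeq, Finset.smul_sum]
        congr 1
        funext z
        rw [smul_smul, Complex.ofReal_mul]
      have hmem1 : α * tr2 ρ (mpow (((((A / B) ^ α : ℝ)) : ℂ) • ω) ((α - 1) / α))
          + (1 - α) * tr2 σ (((((A / B) ^ α : ℝ)) : ℂ) • ω) ∈ S1 :=
        ⟨_, smul_posDef hPD hc, hcone', rfl⟩
      refine le_trans (csInf_le hS1bdd hmem1) (le_of_eq ?_)
      rw [mpow_smul hPD hc, tr2_smul_real, tr2_smul_real]
      calc α * (((A / B) ^ α) ^ ((α - 1) / α) * A) + (1 - α) * ((A / B) ^ α * B)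
          = α * ((A / B) ^ α) ^ ((α - 1) / α) * A + (1 - α) * ((A / B) ^ α) * B := by ring
        _ = A ^ α * B ^ (1 - α) := scalar_eq hA hB hα0
    · -- sInf S2 ≤ sInf S1
      refine le_csInf hS1ne ?_
      rintro x ⟨ω, hPD, hcone, rfl⟩
      have hmem2 : tr2 ρ (mpow ω ((α - 1) / α)) ^ α * tr2 σ ω ^ (1 - α) ∈ S2 :=
        ⟨ω, hPD, hcone, rfl⟩
      refine le_trans (csInf_le hS2bdd hmem2) ?_
      exact Real.geom_mean_le_arith_mean2_weighted hα0.le h1α.le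
        (tr2_nonneg hρ (mpow_posDef hPD _).posSemidef)
        (tr2_nonneg hσ hPD.posSemidef) (by ring)

end MRD
end
end

section
/- Let ρ and σ be quantum states on ℂ^d and let ℳ be a nonempty set of POVMs on ℂ^d. Then the measured max-divergence satisfies D_∞^ℳ(ρ‖σ) ≤ sup { log tr[ρω] + 1 − tr[σω] : ω positive definite, ω ∈ C_ℳ }, and moreover this supremum equals sup { log( tr[ρω] / tr[σω] ) : ω positive definite, ω ∈ C_ℳ }. -/
open scoped Kronecker ComplexOrder
open Matrix Filter

noncomputable section
open scoped Classical

namespace MRD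

variable {n : Type} [Fintype n] [DecidableEq n]

section AuxStmt4

set_option linter.unusedSectionVars false

lemma diag_quad {m : Type} [Fintype m] (X B : Matrix m m ℂ) (i : m) :
    (X * B * Xᴴ) i i = star (star (X i)) ⬝ᵥ B *ᵥ (star (X i)) := by
  simp only [Matrix.mul_apply, Matrix.conjTranspose_apply, dotProduct, Matrix.mulVec,
    Pi.star_apply, star_star, Finset.sum_mul, Finset.mul_sum]
  rw [Finset.sum_comm]
  exact Finset.sum_congr rfl fun k _ => Finset.sum_congr rfl fun l _ => by ring

variable {m : Type} [Fintype m] [DecidableEq m]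

lemma tr2_nonneg_s4 {A B : Matrix m m ℂ} (hA : A.PosSemidef) (hB : B.PosSemidef) :
    0 ≤ tr2 A B := by
  obtain ⟨X, rfl⟩ := (by open MatrixOrder in obtain ⟨B, hB⟩ := CStarAlgebra.nonneg_iff_eq_star_mul_self.mp hA.nonneg; exact ⟨B, hB⟩ : ∃ X : Matrix m m ℂ, A = Xᴴ * X)
  have h : (Xᴴ * X * B).trace = (X * B * Xᴴ).trace := by
    rw [Matrix.mul_assoc, Matrix.trace_mul_comm, Matrix.mul_assoc]
  rw [tr2, h, Matrix.trace]
  simp only [Matrix.diag_apply, Complex.re_sum]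
  refine Finset.sum_nonneg fun i _ => ?_
  rw [diag_quad]
  simpa using hB.re_dotProduct_nonneg (star (X i))

lemma tr2_pos_s4 {A B : Matrix m m ℂ} (hA : A.PosSemidef) (hA1 : A.trace = 1)
    (hB : B.PosDef) : 0 < tr2 A B := by
  obtain ⟨X, rfl⟩ := (by open MatrixOrder in obtain ⟨B, hB⟩ := CStarAlgebra.nonneg_iff_eq_star_mul_self.mp hA.nonneg; exact ⟨B, hB⟩ : ∃ X : Matrix m m ℂ, A = Xᴴ * X)
  have hX : X ≠ 0 := by rintro rfl; simp at hA1
  obtain ⟨i, hi⟩ : ∃ i, X i ≠ 0 := by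
    by_contra h
    push_neg at h
    exact hX (by ext i j; simpa using congrFun (h i) j)
  have h : (Xᴴ * X * B).trace = (X * B * Xᴴ).trace := by
    rw [Matrix.mul_assoc, Matrix.trace_mul_comm, Matrix.mul_assoc]
  rw [tr2, h, Matrix.trace]
  simp only [Matrix.diag_apply, Complex.re_sum]
  refine Finset.sum_pos' (fun j _ => ?_) ⟨i, Finset.mem_univ i, ?_⟩
  · rw [diag_quad]
    simpa using hB.posSemidef.re_dotProduct_nonneg (star (X j))
  · rw [diag_quad]
    have h0 : star (X i) ≠ 0 := fun h => hi (by simpa using congrArg star h)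
    simpa using hB.re_dotProduct_pos h0

lemma tr2_add (A B C : Matrix m m ℂ) : tr2 A (B + C) = tr2 A B + tr2 A C := by
  simp [tr2, Matrix.mul_add]

lemma tr2_smul (A B : Matrix m m ℂ) (c : ℝ) : tr2 A ((c : ℂ) • B) = c * tr2 A B := by
  simp [tr2, Matrix.mul_smul, Complex.smul_re]

lemma tr2_one {A : Matrix m m ℂ} (hA1 : A.trace = 1) : tr2 A 1 = 1 := by
  simp [tr2, hA1]

lemma posSemidef_rsmul {B : Matrix m m ℂ} {c : ℝ} (hc : 0 ≤ c) (hB : B.PosSemidef) :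
    ((c : ℂ) • B).PosSemidef := by
  refine Matrix.PosSemidef.of_dotProduct_mulVec_nonneg ?_ fun x => ?_
  · unfold Matrix.IsHermitian
    rw [Matrix.conjTranspose_smul, hB.isHermitian.eq]
    congr 1
    simp [Complex.star_def, Complex.conj_ofReal]
  · rw [Matrix.smul_mulVec, dotProduct_smul, smul_eq_mul]
    exact mul_nonneg (by simpa using hc) (hB.dotProduct_mulVec_nonneg x)

lemma posDef_rsmul {B : Matrix m m ℂ} {c : ℝ} (hc : 0 < c) (hB : B.PosDef) :
    ((c : ℂ) • B).PosDef := by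
  refine Matrix.PosDef.of_dotProduct_mulVec_pos (posSemidef_rsmul hc.le hB.posSemidef).1 fun x hx => ?_
  rw [Matrix.smul_mulVec, dotProduct_smul, smul_eq_mul]
  exact mul_pos (Complex.zero_lt_real.mpr hc) (hB.dotProduct_mulVec_pos hx)

lemma cone_rsmul {𝓜 : Set (POVM m)} {ω : Matrix m m ℂ} {c : ℝ} (hc : 0 ≤ c)
    (hω : ω ∈ cone 𝓜) : ((c : ℂ) • ω) ∈ cone 𝓜 := by
  obtain ⟨M, hM, lam, hlam, rfl⟩ := hω
  refine ⟨M, hM, fun z => c * lam z, fun z => mul_nonneg hc (hlam z), ?_⟩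
  rw [Finset.smul_sum]
  exact Finset.sum_congr rfl fun z _ => by push_cast; rw [smul_smul]

lemma povm_comb_mem_cone {𝓜 : Set (POVM m)} {M : POVM m} (hM : M ∈ 𝓜) (z : M.ι)
    {s t : ℝ} (hs : 0 ≤ s) (ht : 0 ≤ t) :
    ((s : ℂ) • M.elem z + (t : ℂ) • 1) ∈ cone 𝓜 := by
  refine ⟨M, hM, fun z' => (if z' = z then s else 0) + t,
    fun z' => by positivity, ?_⟩
  calc (s : ℂ) • M.elem z + (t : ℂ) • 1
      = (∑ z', (if z' = z then (s : ℂ) else 0) • M.elem z') + ∑ z', (t : ℂ) • M.elem z' := by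
        rw [← Finset.smul_sum, M.sum_one]
        simp [ite_smul]
    _ = ∑ z', ((((if z' = z then s else 0) + t : ℝ)) : ℂ) • M.elem z' := by
        rw [← Finset.sum_add_distrib]
        refine Finset.sum_congr rfl fun z' _ => ?_
        rw [← add_smul]
        congr 1
        split <;> simp

end AuxStmt4

theorem stmt4 (d : ℕ) (ρ σ : Matrix (Fin d) (Fin d) ℂ)
    (hρ : ρ.PosSemidef) (hρ1 : ρ.trace = 1) (hσ : σ.PosSemidef) (hσ1 : σ.trace = 1)
    (𝓜 : Set (POVM (Fin d))) (h𝓜 : 𝓜.Nonempty) :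
    mrdiv 𝓜 ⊤ ρ σ
      ≤ (⨆ ω ∈ {ω : Matrix (Fin d) (Fin d) ℂ | ω.PosDef ∧ ω ∈ cone 𝓜},
          ((Real.log (tr2 ρ ω) + 1 - tr2 σ ω : ℝ) : EReal)) ∧
    (⨆ ω ∈ {ω : Matrix (Fin d) (Fin d) ℂ | ω.PosDef ∧ ω ∈ cone 𝓜},
          ((Real.log (tr2 ρ ω) + 1 - tr2 σ ω : ℝ) : EReal))
      = ⨆ ω ∈ {ω : Matrix (Fin d) (Fin d) ℂ | ω.PosDef ∧ ω ∈ cone 𝓜},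
          ((Real.log (tr2 ρ ω / tr2 σ ω) : ℝ) : EReal) := by
  have hσpos : ∀ ω : Matrix (Fin d) (Fin d) ℂ, ω.PosDef → 0 < tr2 σ ω :=
    fun ω hω => tr2_pos_s4 hσ hσ1 hω
  have hρpos : ∀ ω : Matrix (Fin d) (Fin d) ℂ, ω.PosDef → 0 < tr2 ρ ω :=
    fun ω hω => tr2_pos_s4 hρ hρ1 hω
  have key2 :
      (⨆ ω ∈ {ω : Matrix (Fin d) (Fin d) ℂ | ω.PosDef ∧ ω ∈ cone 𝓜},
          ((Real.log (tr2 ρ ω) + 1 - tr2 σ ω : ℝ) : EReal))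
        = ⨆ ω ∈ {ω : Matrix (Fin d) (Fin d) ℂ | ω.PosDef ∧ ω ∈ cone 𝓜},
          ((Real.log (tr2 ρ ω / tr2 σ ω) : ℝ) : EReal) := by
    apply le_antisymm
    · refine iSup₂_le fun ω hω => le_iSup₂_of_le ω hω ?_
      rw [EReal.coe_le_coe_iff]
      have h1 := hρpos ω hω.1
      have h2 := hσpos ω hω.1
      rw [Real.log_div h1.ne' h2.ne']
      have := Real.log_le_sub_one_of_pos h2
      linarith
    · refine iSup₂_le fun ω hω => ?_
      have h2 := hσpos ω hω.1
      have hcpos : (0:ℝ) < (tr2 σ ω)⁻¹ := inv_pos.mpr h2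
      refine le_iSup₂_of_le ((((tr2 σ ω)⁻¹ : ℝ) : ℂ) • ω)
        ⟨posDef_rsmul hcpos hω.1, cone_rsmul hcpos.le hω.2⟩ ?_
      rw [EReal.coe_le_coe_iff, tr2_smul, tr2_smul, inv_mul_cancel₀ h2.ne',
        inv_mul_eq_div]
      linarith
  refine ⟨?_, key2⟩
  rw [key2]
  simp only [mrdiv, rdiv, reduceIte]
  refine iSup₂_le fun M hM => ?_
  rw [show M.dist ρ = (fun z => tr2 ρ (M.elem z)) from rfl,
    show M.dist σ = (fun z => tr2 σ (M.elem z)) from rfl, Dmax]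
  refine iSup_le fun zz => ?_
  obtain ⟨z, hz⟩ := zz
  simp only at hz ⊢
  have hμ0 : 0 ≤ tr2 ρ (M.elem z) := tr2_nonneg_s4 hρ (M.pos z)
  have hμ : 0 < tr2 ρ (M.elem z) := hμ0.lt_of_ne (Ne.symm hz)
  have hν0 : 0 ≤ tr2 σ (M.elem z) := tr2_nonneg_s4 hσ (M.pos z)
  have hle : ∀ s t : ℝ, 0 ≤ s → 0 < t →
      ((Real.log ((s * tr2 ρ (M.elem z) + t) / (s * tr2 σ (M.elem z) + t)) : ℝ) : EReal)
        ≤ ⨆ ω ∈ {ω : Matrix (Fin d) (Fin d) ℂ | ω.PosDef ∧ ω ∈ cone 𝓜},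
            ((Real.log (tr2 ρ ω / tr2 σ ω) : ℝ) : EReal) := by
    intro s t hs ht
    have hpd : ((s : ℂ) • M.elem z + (t : ℂ) • 1).PosDef :=
      Matrix.PosDef.posSemidef_add (posSemidef_rsmul hs (M.pos z))
        (posDef_rsmul ht Matrix.PosDef.one)
    have h1 : tr2 ρ ((s : ℂ) • M.elem z + (t : ℂ) • 1) = s * tr2 ρ (M.elem z) + t := by
      rw [tr2_add, tr2_smul, tr2_smul, tr2_one hρ1, mul_one]
    have h2 : tr2 σ ((s : ℂ) • M.elem z + (t : ℂ) • 1) = s * tr2 σ (M.elem z) + t := by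
      rw [tr2_add, tr2_smul, tr2_smul, tr2_one hσ1, mul_one]
    refine le_iSup₂_of_le ((s : ℂ) • M.elem z + (t : ℂ) • 1)
      ⟨hpd, povm_comb_mem_cone hM z hs ht.le⟩ ?_
    rw [h1, h2]
  by_cases hν : tr2 σ (M.elem z) = 0
  · rw [if_pos hν, top_le_iff, EReal.eq_top_iff_forall_lt]
    intro y
    refine lt_of_lt_of_le ?_ (hle (Real.exp y / tr2 ρ (M.elem z)) 1 (by positivity) one_pos)
    rw [EReal.coe_lt_coe_iff, hν, mul_zero, zero_add, div_one]
    have hsm : Real.exp y / tr2 ρ (M.elem z) * tr2 ρ (M.elem z) = Real.exp y := by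
      field_simp
    rw [hsm, Real.lt_log_iff_exp_lt (by positivity)]
    linarith [Real.exp_pos y]
  · rw [if_neg hν]
    have hνpos : 0 < tr2 σ (M.elem z) := hν0.lt_of_ne (Ne.symm hν)
    have htend : Tendsto
        (fun ε : ℝ => ((Real.log ((1 * tr2 ρ (M.elem z) + ε) / (1 * tr2 σ (M.elem z) + ε)) : ℝ)
          : EReal)) (nhdsWithin 0 (Set.Ioi 0))
        (nhds ((Real.log (tr2 ρ (M.elem z) / tr2 σ (M.elem z)) : ℝ) : EReal)) := by
      rw [EReal.tendsto_coe]
      have hc : ContinuousAt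
          (fun ε : ℝ => Real.log ((1 * tr2 ρ (M.elem z) + ε) / (1 * tr2 σ (M.elem z) + ε))) 0 := by
        apply ContinuousAt.log
        · exact ContinuousAt.div (by fun_prop) (by fun_prop) (by simp [hνpos.ne'])
        · simp only [one_mul, add_zero]
          positivity
      have := hc.tendsto.mono_left (nhdsWithin_le_nhds (s := Set.Ioi (0:ℝ)))
      simpa using this
    refine le_of_tendsto htend ?_
    exact Filter.eventually_of_mem self_mem_nhdsWithin
      (fun ε hε => hle 1 ε zero_le_one hε)


end MRD
end
end
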